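/- Let Y be a Banach space and A ⊆ Y a nonempty closed convex cone with A ≠ Y. Then the oriented distance function D_A is nonincreasing with respect to the cone order: if y₁ − y₂ ∈ A then D_A(y₁) ≤ D_A(y₂); moreover if A has nonempty interior and y₁ − y₂ ∈ int A, then D_A(y₁) < D_A(y₂). -/

import Mathlib

/-!
A convex cone is closed under addition, so for `u ∈ A` the translation `y ↦ y + u` maps `A`
into `A` and `y ↦ y - u` maps `Aᶜ` into `Aᶜ`: along `y ↦ y + u` the distance to `A` can only
drop and the distance to `Aᶜ` can only grow. If `ball u δ ⊆ A`, then `A + ball u δ ⊆ A` and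
`Aᶜ - ball u δ ⊆ Aᶜ`, so whichever of the two distances is nonzero moves by at least `δ`.
In the remaining case, `y ∉ A` but `y + u ∈ A`, the sign of `D_A` changes; this is strict
because `A` is closed.
-/

open Metric

section Translation

variable {E : Type*} [SeminormedAddCommGroup E]

theorem infDist_add_le_of_forall_add_mem {t : Set E} {v : E} (h : ∀ c ∈ t, c + v ∈ t) (x : E) :
    infDist (x + v) t ≤ infDist x t := by
  rcases t.eq_empty_or_nonempty with rfl | ht
  · simp
  refine (le_infDist ht).2 fun c hc => ?_
  calc infDist (x + v) t ≤ dist (x + v) (c + v) := infDist_le_dist_of_mem (h c hc)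
    _ = dist x c := dist_add_right x c v

theorem infDist_add_add_le_of_forall_ball_subset [NormedSpace ℝ E] {t : Set E} (ht : t.Nonempty)
    {v : E} {δ : ℝ} (hδ : 0 < δ) (h : ∀ c ∈ t, ball (c + v) δ ⊆ t) {x : E} (hx : x + v ∉ t) :
    infDist (x + v) t + δ ≤ infDist x t := by
  refine (le_infDist ht).2 fun c hc => ?_
  by_contra! hlt
  have hmem : ∀ y, dist y c < δ → y + v ∈ t := fun y hy =>
    h c hc (by rwa [mem_ball, dist_add_right])
  rcases (infDist_nonneg (x := x + v) (s := t)).eq_or_lt with hR | hR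
  · exact hx (hmem x (by linarith))
  · -- a point `y` cutting `[x, c]` into pieces shorter than `infDist (x + v) t` and `δ` has
    -- `y + v ∈ t` closer to `x + v` than `infDist (x + v) t`
    obtain ⟨y, hxy, hyc⟩ := exists_dist_lt_lt hR hδ (by linarith : dist x c < δ + infDist (x + v) t)
    exact (infDist_le_dist_of_mem (hmem y hyc)).not_gt (by rwa [dist_add_right])

end Translation

theorem add_mem_of_convex_of_smul_mem {E : Type*} [AddCommGroup E] [Module ℝ E] {A : Set E}
    (hconv : Convex ℝ A) (hcone : ∀ t : ℝ, 0 ≤ t → ∀ y ∈ A, t • y ∈ A) {a b : E} (ha : a ∈ A)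
    (hb : b ∈ A) : a + b ∈ A := by
  have hmid : (1 / 2 : ℝ) • a + (1 / 2 : ℝ) • b ∈ A := hconv ha hb (by norm_num) (by norm_num)
    (by norm_num)
  convert hcone 2 (by norm_num) _ hmid using 1
  rw [smul_add, smul_smul, smul_smul]
  norm_num

noncomputable def orientedDist {E : Type*} [PseudoMetricSpace E] (A : Set E) (y : E) : ℝ :=
  infDist y A - infDist y Aᶜ

section AddClosed

variable {E : Type*} [SeminormedAddCommGroup E] {A : Set E}

theorem orientedDist_add_le (hadd : ∀ a ∈ A, ∀ b ∈ A, a + b ∈ A) {u : E} (hu : u ∈ A) (y : E) :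
    orientedDist A (y + u) ≤ orientedDist A y := by
  have hA : infDist (y + u) A ≤ infDist y A :=
    infDist_add_le_of_forall_add_mem (fun a ha => hadd a ha u hu) y
  have hAc : infDist (y + u + -u) Aᶜ ≤ infDist (y + u) Aᶜ :=
    infDist_add_le_of_forall_add_mem (t := Aᶜ)
      (fun c hc hcu => hc (by simpa using hadd _ hcu u hu)) _
  rw [add_neg_cancel_right] at hAc
  unfold orientedDist
  linarith

theorem ball_add_subset_of_ball_subset (hadd : ∀ a ∈ A, ∀ b ∈ A, a + b ∈ A) {u : E} {δ : ℝ}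
    (hball : ball u δ ⊆ A) {a : E} (ha : a ∈ A) : ball (a + u) δ ⊆ A := fun z hz => by
  have hza : z - a ∈ A := hball (by rwa [mem_ball, dist_sub_eq_dist_add_left, add_comm])
  simpa using hadd a ha _ hza

theorem ball_sub_subset_compl_of_ball_subset (hadd : ∀ a ∈ A, ∀ b ∈ A, a + b ∈ A) {u : E}
    {δ : ℝ} (hball : ball u δ ⊆ A) {c : E} (hc : c ∉ A) : ball (c - u) δ ⊆ Aᶜ := fun z hz hzA => by
  have hcz : c - z ∈ A := hball (by
    rwa [mem_ball, dist_sub_eq_dist_add_left, dist_comm, add_comm, ← dist_sub_eq_dist_add_right])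
  exact hc (by simpa using hadd z hzA _ hcz)

theorem orientedDist_add_lt [NormedSpace ℝ E] (hadd : ∀ a ∈ A, ∀ b ∈ A, a + b ∈ A)
    (hclosed : IsClosed A) (hne : A.Nonempty) (hne' : Aᶜ.Nonempty) {u : E} (hu : u ∈ interior A)
    (y : E) : orientedDist A (y + u) < orientedDist A y := by
  obtain ⟨δ, hδ, hball⟩ := isOpen_iff.1 isOpen_interior u hu
  replace hball : ball u δ ⊆ A := hball.trans interior_subset
  unfold orientedDist
  by_cases hy : y ∈ A
  · have hAc : infDist (y + u + -u) Aᶜ + δ ≤ infDist (y + u) Aᶜ :=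
      infDist_add_add_le_of_forall_ball_subset hne' hδ
        (fun c hc => by simpa only [sub_eq_add_neg] using
          ball_sub_subset_compl_of_ball_subset hadd hball hc)
        (by simpa using hy)
    rw [add_neg_cancel_right] at hAc
    rw [infDist_zero_of_mem hy, infDist_zero_of_mem (hadd y hy u (interior_subset hu))]
    linarith
  have hAc : infDist y Aᶜ = 0 := infDist_zero_of_mem hy
  by_cases hyu : y + u ∈ A
  · have hpos : 0 < infDist y A := (hclosed.notMem_iff_infDist_pos hne).1 hy
    rw [infDist_zero_of_mem hyu, hAc]
    linarith [infDist_nonneg (x := y + u) (s := Aᶜ)]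
  · have hA : infDist (y + u) A + δ ≤ infDist y A :=
      infDist_add_add_le_of_forall_ball_subset hne hδ
        (fun a ha => ball_add_subset_of_ball_subset hadd hball ha) hyu
    rw [infDist_zero_of_mem (show y + u ∈ Aᶜ from hyu), hAc]
    linarith

end AddClosed

theorem orientedDist_antitone_general
    {Y : Type*} [NormedAddCommGroup Y] [NormedSpace ℝ Y]
    (A : Set Y) (hne : A.Nonempty) (hAclosed : IsClosed A) (hAconv : Convex ℝ A)
    (hAcone : ∀ t : ℝ, 0 ≤ t → ∀ y ∈ A, t • y ∈ A) (hAne : A ≠ Set.univ) :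
    (∀ y₁ y₂ : Y, y₁ - y₂ ∈ A →
      Metric.infDist y₁ A - Metric.infDist y₁ Aᶜ ≤
        Metric.infDist y₂ A - Metric.infDist y₂ Aᶜ) ∧
    ((interior A).Nonempty → ∀ y₁ y₂ : Y, y₁ - y₂ ∈ interior A →
      Metric.infDist y₁ A - Metric.infDist y₁ Aᶜ <
        Metric.infDist y₂ A - Metric.infDist y₂ Aᶜ) := by
  have hadd : ∀ a ∈ A, ∀ b ∈ A, a + b ∈ A := fun a ha b hb =>
    add_mem_of_convex_of_smul_mem hAconv hAcone ha hb
  refine ⟨fun y₁ y₂ hu => ?_, fun _ y₁ y₂ hu => ?_⟩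
  · simpa [orientedDist] using orientedDist_add_le hadd hu y₂
  · simpa [orientedDist] using
      orientedDist_add_lt hadd hAclosed hne (Set.nonempty_compl.2 hAne) hu y₂

/-- For a nonempty closed convex cone `A ≠ Y`, the oriented distance `D_A` is
nonincreasing w.r.t. the cone order; strictly if the difference lies in the interior. -/
theorem orientedDist_antitone
    {Y : Type*} [NormedAddCommGroup Y] [NormedSpace ℝ Y] [CompleteSpace Y]
    (A : Set Y) (hne : A.Nonempty) (hAclosed : IsClosed A) (hAconv : Convex ℝ A)
    (hAcone : ∀ t : ℝ, 0 ≤ t → ∀ y ∈ A, t • y ∈ A) (hAne : A ≠ Set.univ) :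
    (∀ y₁ y₂ : Y, y₁ - y₂ ∈ A →
      Metric.infDist y₁ A - Metric.infDist y₁ Aᶜ ≤
        Metric.infDist y₂ A - Metric.infDist y₂ Aᶜ) ∧
    ((interior A).Nonempty → ∀ y₁ y₂ : Y, y₁ - y₂ ∈ interior A →
      Metric.infDist y₁ A - Metric.infDist y₁ Aᶜ <
        Metric.infDist y₂ A - Metric.infDist y₂ Aᶜ) :=
  orientedDist_antitone_general A hne hAclosed hAconv hAcone hAne
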